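/- arXiv:1901.05621 — 2 statements merged into one kernel-verified Lean document; each statement's English description precedes it below -/
import Mathlib

section
/- In dimension d = 3, for any ρ ≥ 0 pairwise incomparable points in (0,1)^3 with no ties in any coordinate, the number of minimal elements of the record-setting region is exactly 2ρ + 1. -/
/-- The record-setting region of the points `r 0, …, r (ρ-1)` within `[0,1)^d`. -/
def recordSet {d ρ : ℕ} (r : Fin ρ → Fin d → ℝ) : Set (Fin d → ℝ) :=
  {x | (∀ j, x j ∈ Set.Ico (0:ℝ) 1) ∧ ∀ i, ¬ ∀ j, x j < r i j}

/-- The generators: minimal elements of the record-setting region. -/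
def generators {d ρ : ℕ} (r : Fin ρ → Fin d → ℝ) : Set (Fin d → ℝ) :=
  {g | g ∈ recordSet r ∧ ∀ y ∈ recordSet r, y ≤ g → y = g}

attribute [local instance] Classical.propDecidable

/-! ### fold max helpers -/

lemma foldmax_cases {α : Type*} (s : Finset α) (f : α → ℝ) :
    s.fold max 0 f = 0 ∨ ∃ a ∈ s, f a = s.fold max 0 f := by
  classical
  induction s using Finset.induction_on with
  | empty => left; simp
  | insert _ _ ha ih =>
    rename_i a s
    rw [Finset.fold_insert ha]
    rcases max_choice (f a) (s.fold max 0 f) with h | h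
    · right; exact ⟨a, Finset.mem_insert_self a s, h.symm⟩
    · rw [h]
      rcases ih with h0 | ⟨b, hb, hfb⟩
      · left; exact h0
      · right; exact ⟨b, Finset.mem_insert_of_mem hb, hfb⟩

lemma le_foldmax {α : Type*} {s : Finset α} {f : α → ℝ} {a : α} (ha : a ∈ s) :
    f a ≤ s.fold max 0 f :=
  (Finset.le_fold_max _).2 (Or.inr ⟨a, ha, le_rfl⟩)

lemma foldmax_nonneg {α : Type*} (s : Finset α) (f : α → ℝ) :
    0 ≤ s.fold max 0 f :=
  (Finset.le_fold_max _).2 (Or.inl le_rfl)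

lemma foldmax_lt {α : Type*} {s : Finset α} {f : α → ℝ} {c : ℝ} (hc : 0 < c)
    (h : ∀ a ∈ s, f a < c) : s.fold max 0 f < c := by
  rcases foldmax_cases s f with h0 | ⟨a, ha, hfa⟩
  · rw [h0]; exact hc
  · rw [← hfa]; exact h a ha

/-! ### 2D staircase theory -/

/-- The 2D record-setting region. -/
def S2 (Q : Finset (ℝ × ℝ)) : Set (ℝ × ℝ) :=
  {v | 0 ≤ v.1 ∧ v.1 < 1 ∧ 0 ≤ v.2 ∧ v.2 < 1 ∧ ∀ p ∈ Q, ¬(v.1 < p.1 ∧ v.2 < p.2)}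

/-- Minimal elements of the 2D record-setting region. -/
def G2 (Q : Finset (ℝ × ℝ)) : Set (ℝ × ℝ) :=
  {g | g ∈ S2 Q ∧ ∀ v ∈ S2 Q, v ≤ g → v = g}

lemma mem_G2_iff (Q : Finset (ℝ × ℝ)) (v : ℝ × ℝ) :
    v ∈ G2 Q ↔ v ∈ S2 Q ∧
      (v.1 = 0 ∨ ∃ p ∈ Q, p.1 = v.1 ∧ v.2 < p.2) ∧
      (v.2 = 0 ∨ ∃ p ∈ Q, p.2 = v.2 ∧ v.1 < p.1) := by
  constructor
  · rintro ⟨hS, hmin⟩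
    refine ⟨hS, ?_, ?_⟩
    · by_contra hcon
      push_neg at hcon
      obtain ⟨h10, hw⟩ := hcon
      set T := Q.filter (fun p => v.2 < p.2) with hT
      set c := T.fold max 0 (fun p => p.1) with hc
      have hlt : ∀ p ∈ T, p.1 < v.1 := by
        intro p hp
        rw [Finset.mem_filter] at hp
        have h1 : ¬ (v.1 < p.1) := fun hlt => hS.2.2.2.2 p hp.1 ⟨hlt, hp.2⟩
        have h2 : p.1 ≠ v.1 := fun he => absurd hp.2 (not_lt.2 (hw p hp.1 he))
        exact lt_of_le_of_ne (not_lt.1 h1) h2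
      have hv1pos : 0 < v.1 := lt_of_le_of_ne hS.1 (Ne.symm h10)
      have hclt : c < v.1 := foldmax_lt hv1pos hlt
      have hcS : (c, v.2) ∈ S2 Q := by
        refine ⟨foldmax_nonneg _ _, hclt.trans hS.2.1, hS.2.2.1, hS.2.2.2.1, ?_⟩
        intro p hp ⟨hp1, hp2⟩
        have hpT : p ∈ T := Finset.mem_filter.2 ⟨hp, hp2⟩
        exact absurd (le_foldmax hpT) (not_le.2 hp1)
      have := hmin (c, v.2) hcS ⟨hclt.le, le_rfl⟩
      exact absurd (congrArg Prod.fst this) (ne_of_lt hclt)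
    · by_contra hcon
      push_neg at hcon
      obtain ⟨h20, hw⟩ := hcon
      set T := Q.filter (fun p => v.1 < p.1) with hT
      set c := T.fold max 0 (fun p => p.2) with hc
      have hlt : ∀ p ∈ T, p.2 < v.2 := by
        intro p hp
        rw [Finset.mem_filter] at hp
        have h1 : ¬ (v.2 < p.2) := fun hlt => hS.2.2.2.2 p hp.1 ⟨hp.2, hlt⟩
        have h2 : p.2 ≠ v.2 := fun he => absurd hp.2 (not_lt.2 (hw p hp.1 he))
        exact lt_of_le_of_ne (not_lt.1 h1) h2
      have hv2pos : 0 < v.2 := lt_of_le_of_ne hS.2.2.1 (Ne.symm h20)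
      have hclt : c < v.2 := foldmax_lt hv2pos hlt
      have hcS : (v.1, c) ∈ S2 Q := by
        refine ⟨hS.1, hS.2.1, foldmax_nonneg _ _, hclt.trans hS.2.2.2.1, ?_⟩
        intro p hp ⟨hp1, hp2⟩
        have hpT : p ∈ T := Finset.mem_filter.2 ⟨hp, hp1⟩
        exact absurd (le_foldmax hpT) (not_le.2 hp2)
      have := hmin (v.1, c) hcS ⟨le_rfl, hclt.le⟩
      exact absurd (congrArg Prod.snd this) (ne_of_lt hclt)
  · rintro ⟨hS, hw1, hw2⟩
    refine ⟨hS, ?_⟩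
    rintro w hw ⟨hle1, hle2⟩
    have e1 : w.1 = v.1 := by
      rcases eq_or_lt_of_le hle1 with h | h
      · exact h
      · exfalso
        rcases hw1 with h0 | ⟨p, hp, hp1, hp2⟩
        · exact absurd (h0 ▸ h) (not_lt.2 hw.1)
        · exact hw.2.2.2.2 p hp ⟨hp1 ▸ h, lt_of_le_of_lt hle2 hp2⟩
    have e2 : w.2 = v.2 := by
      rcases eq_or_lt_of_le hle2 with h | h
      · exact h
      · exfalso
        rcases hw2 with h0 | ⟨p, hp, hp2, hp1⟩
        · exact absurd (h0 ▸ h) (not_lt.2 hw.2.2.1)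
        · exact hw.2.2.2.2 p hp ⟨lt_of_le_of_lt hle1 hp1, hp2 ▸ h⟩
    exact Prod.ext e1 e2

/-- Maximal points of a planar finite set. -/
noncomputable def maxF (Q : Finset (ℝ × ℝ)) : Finset (ℝ × ℝ) :=
  Q.filter (fun p => ∀ u ∈ Q, ¬(p.1 < u.1 ∧ p.2 < u.2))

/-- Points of `Q` strictly above level `t` in the second coordinate. -/
noncomputable def up2 (Q : Finset (ℝ × ℝ)) (t : ℝ) : Finset (ℝ × ℝ) := Q.filter (fun u => t < u.2)

/-- Max of first coordinates (0 if empty). -/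
noncomputable def M1 (X : Finset (ℝ × ℝ)) : ℝ := X.fold max 0 (fun p => p.1)

/-- The candidate generator at level `p.2`. -/
noncomputable def gen (Q : Finset (ℝ × ℝ)) (p : ℝ × ℝ) : ℝ × ℝ := (M1 (up2 Q p.2), p.2)

lemma gen_mem_G2 {Q : Finset (ℝ × ℝ)}
    (hQ : ∀ p ∈ Q, 0 < p.1 ∧ p.1 < 1 ∧ 0 < p.2 ∧ p.2 < 1)
    (h1 : ∀ p ∈ Q, ∀ u ∈ Q, p.1 = u.1 → p = u)
    {p : ℝ × ℝ} (hp : p ∈ Q) (hpmax : ∀ u ∈ Q, ¬(p.1 < u.1 ∧ p.2 < u.2)) :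
    gen Q p ∈ G2 Q := by
  have hup : ∀ u ∈ up2 Q p.2, u.1 < p.1 := by
    intro u hu
    rw [up2, Finset.mem_filter] at hu
    have hne : u ≠ p := by rintro rfl; exact absurd hu.2 (lt_irrefl _)
    have : ¬ (p.1 < u.1) := fun h => hpmax u hu.1 ⟨h, hu.2⟩
    exact lt_of_le_of_ne (not_lt.1 this) (fun he => hne (h1 u hu.1 p hp he))
  have hMlt : M1 (up2 Q p.2) < p.1 := foldmax_lt (hQ p hp).1 hup
  rw [mem_G2_iff]
  refine ⟨⟨foldmax_nonneg _ _, hMlt.trans (hQ p hp).2.1, (hQ p hp).2.2.1.le,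
      (hQ p hp).2.2.2, ?_⟩, ?_, ?_⟩
  · intro u hu ⟨hu1, hu2⟩
    have : u ∈ up2 Q p.2 := Finset.mem_filter.2 ⟨hu, hu2⟩
    exact absurd (le_foldmax this) (not_le.2 hu1)
  · rcases foldmax_cases (up2 Q p.2) (fun u => u.1) with h0 | ⟨u, hu, hfu⟩
    · left; exact h0
    · right
      rw [up2, Finset.mem_filter] at hu
      exact ⟨u, hu.1, hfu, hu.2⟩
  · right; exact ⟨p, hp, rfl, hMlt⟩

lemma G2_finite (Q : Finset (ℝ × ℝ)) : (G2 Q).Finite := by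
  apply Set.Finite.subset (Set.Finite.prod
    (Set.Finite.insert 0 (Q.finite_toSet.image Prod.fst))
    (Set.Finite.insert 0 (Q.finite_toSet.image Prod.snd)))
  rintro v hv
  rw [mem_G2_iff] at hv
  constructor
  · rcases hv.2.1 with h0 | ⟨p, hp, hp1, -⟩
    · exact Set.mem_insert_iff.2 (Or.inl h0)
    · exact Set.mem_insert_iff.2 (Or.inr ⟨p, hp, hp1⟩)
  · rcases hv.2.2 with h0 | ⟨p, hp, hp2, -⟩
    · exact Set.mem_insert_iff.2 (Or.inl h0)
    · exact Set.mem_insert_iff.2 (Or.inr ⟨p, hp, hp2⟩)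

lemma G2_below_ncard (Q : Finset (ℝ × ℝ))
    (hQ : ∀ p ∈ Q, 0 < p.1 ∧ p.1 < 1 ∧ 0 < p.2 ∧ p.2 < 1)
    (h1 : ∀ p ∈ Q, ∀ u ∈ Q, p.1 = u.1 → p = u)
    (h2 : ∀ p ∈ Q, ∀ u ∈ Q, p.2 = u.2 → p = u)
    (q : ℝ × ℝ) (hq1 : 0 < q.1) (hq2 : 0 < q.2)
    (hundom : ∀ p ∈ Q, ¬(q.1 < p.1 ∧ q.2 < p.2))
    (hqt1 : ∀ p ∈ Q, p.1 ≠ q.1) (hqt2 : ∀ p ∈ Q, p.2 ≠ q.2) :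
    {v ∈ G2 Q | v.1 < q.1 ∧ v.2 < q.2}.ncard
      = ((maxF Q).filter (fun p => p.1 < q.1 ∧ p.2 < q.2)).card + 1 := by
  set D := (maxF Q).filter (fun p => p.1 < q.1 ∧ p.2 < q.2) with hD
  have hDspec : ∀ p ∈ D, p ∈ Q ∧ (∀ u ∈ Q, ¬(p.1 < u.1 ∧ p.2 < u.2)) ∧ p.1 < q.1 ∧ p.2 < q.2 := by
    intro p hp
    rw [hD, Finset.mem_filter, maxF, Finset.mem_filter] at hp
    exact ⟨hp.1.1, hp.1.2, hp.2⟩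
  -- the image of D under `gen Q` is contained in the LHS
  have himg : ∀ p ∈ D, gen Q p ∈ G2 Q ∧ (gen Q p).1 < q.1 ∧ (gen Q p).2 < q.2 := by
    intro p hp
    obtain ⟨hpQ, hpmax, hpq1, hpq2⟩ := hDspec p hp
    refine ⟨gen_mem_G2 hQ h1 hpQ hpmax, ?_, hpq2⟩
    apply foldmax_lt hq1
    intro u hu
    rw [up2, Finset.mem_filter] at hu
    have : ¬ (q.1 < u.1) := fun h => hpmax u hu.1 ⟨hpq1.trans h, hu.2⟩
    exact lt_of_le_of_ne (not_lt.1 this) (hqt1 u hu.1)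
  -- complete analysis of an element of the LHS
  have key : ∀ v, v ∈ G2 Q → v.1 < q.1 → v.2 < q.2 →
      (v = (M1 Q, 0) ∧ ∀ u ∈ Q, u.1 < q.1) ∨
      ∃ p ∈ Q, p.2 = v.2 ∧ (∀ u ∈ Q, ¬(p.1 < u.1 ∧ p.2 < u.2)) ∧ v = gen Q p ∧
        p.2 < q.2 ∧ v.1 < p.1 := by
    intro v hv hv1 hv2
    rw [mem_G2_iff] at hv
    obtain ⟨hS, hw1, hw2⟩ := hv
    rcases hw2 with h20 | ⟨p, hpQ, hp2, hp1⟩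
    · left
      have hge : ∀ u ∈ Q, u.1 ≤ v.1 := by
        intro u hu
        by_contra hcon
        exact hS.2.2.2.2 u hu ⟨not_le.1 hcon, h20 ▸ (hQ u hu).2.2.1⟩
      have hMv : M1 Q = v.1 := by
        refine le_antisymm ((Finset.fold_max_le _).2 ⟨hS.1, hge⟩) ?_
        rcases hw1 with h0 | ⟨u, hu, hu1, -⟩
        · rw [h0]; exact foldmax_nonneg _ _
        · exact hu1 ▸ le_foldmax hu
      exact ⟨Prod.ext hMv.symm h20, fun u hu => lt_of_le_of_lt (hge u hu) hv1⟩
    · right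
      have hge : ∀ u ∈ up2 Q v.2, u.1 ≤ v.1 := by
        intro u hu
        rw [up2, Finset.mem_filter] at hu
        by_contra hcon
        exact hS.2.2.2.2 u hu.1 ⟨not_le.1 hcon, hu.2⟩
      have hMv : M1 (up2 Q v.2) = v.1 := by
        refine le_antisymm ((Finset.fold_max_le _).2 ⟨hS.1, hge⟩) ?_
        rcases hw1 with h0 | ⟨u, hu, hu1, hu2⟩
        · rw [h0]; exact foldmax_nonneg _ _
        · exact hu1 ▸ le_foldmax (Finset.mem_filter.2 ⟨hu, hu2⟩)
      have hpmax : ∀ u ∈ Q, ¬(p.1 < u.1 ∧ p.2 < u.2) := by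
        rintro u hu ⟨hd1, hd2⟩
        have : u ∈ up2 Q v.2 := Finset.mem_filter.2 ⟨hu, hp2 ▸ hd2⟩
        exact absurd hd1 (not_lt.2 ((hge u this).trans hp1.le))
      refine ⟨p, hpQ, hp2, hpmax, ?_, hp2 ▸ hv2, hp1⟩
      rw [gen, hp2]
      exact Prod.ext hMv.symm rfl
  -- injectivity of `gen Q` on D
  have hinj : Set.InjOn (gen Q) ↑D := by
    intro p hp u hu he
    have hp2 : (gen Q p).2 = p.2 := rfl
    have : p.2 = u.2 := by rw [← hp2, he]; rfl
    exact h2 p (hDspec p hp).1 u (hDspec u hu).1 this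
  -- produce the extra element
  obtain ⟨e, he_set, he_mem⟩ :
      ∃ e, {v ∈ G2 Q | v.1 < q.1 ∧ v.2 < q.2} = insert e (gen Q '' ↑D) ∧
        e ∉ gen Q '' ↑D := by
    by_cases hB : (Q.filter (fun u => q.1 < u.1)).Nonempty
    · -- extra element at the level of the highest point to the right of q
      obtain ⟨i, hiB, himax⟩ := Finset.exists_max_image _ (fun u => u.2) hB
      rw [Finset.mem_filter] at hiB
      obtain ⟨hiQ, hiq1⟩ := hiB
      have himaxQ : ∀ u ∈ Q, ¬(i.1 < u.1 ∧ i.2 < u.2) := by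
        rintro u hu ⟨hd1, hd2⟩
        have huB : u ∈ Q.filter (fun u => q.1 < u.1) :=
          Finset.mem_filter.2 ⟨hu, hiq1.trans hd1⟩
        exact absurd hd2 (not_lt.2 (himax u huB))
      have hi2 : i.2 < q.2 := by
        have := hundom i hiQ
        push_neg at this
        exact lt_of_le_of_ne (this hiq1) (hqt2 i hiQ)
      refine ⟨gen Q i, ?_, ?_⟩
      · apply Set.Subset.antisymm
        · rintro v ⟨hv, hv1, hv2⟩
          rcases key v hv hv1 hv2 with ⟨-, hall⟩ | ⟨p, hpQ, hp2, hpmax, hvgen, hpq2, hvp1⟩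
          · exact absurd (hall i hiQ) (not_lt.2 hiq1.le)
          · by_cases hpq1 : p.1 < q.1
            · exact Set.mem_insert_of_mem _
                ⟨p, by
                  simp only [Finset.mem_coe, hD, maxF, Finset.mem_filter]
                  exact ⟨⟨hpQ, hpmax⟩, hpq1, hpq2⟩, hvgen.symm⟩
            · have hq1p : q.1 < p.1 :=
                lt_of_le_of_ne (not_lt.1 hpq1) (Ne.symm (hqt1 p hpQ))
              have : p = i := by
                by_contra hne
                rcases lt_or_gt_of_ne (fun he : p.2 = i.2 => hne (h2 p hpQ i hiQ he)) with h | h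
                · -- p.2 < i.2 : i is above level v.2, so i.1 ≤ v.1 < q.1, contra
                  have hiup : i ∈ up2 Q p.2 := Finset.mem_filter.2 ⟨hiQ, h⟩
                  have hle : i.1 ≤ v.1 := by
                    rw [hvgen]
                    exact le_foldmax (f := fun u => u.1) hiup
                  exact absurd (hle.trans_lt hv1) (not_lt.2 hiq1.le)
                · -- i.2 < p.2 : p ∈ B contradicts maximality of i
                  have hpB : p ∈ Q.filter (fun u => q.1 < u.1) :=
                    Finset.mem_filter.2 ⟨hpQ, hq1p⟩
                  exact absurd (himax p hpB) (not_le.2 h)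
              rw [hvgen, this]
              exact Set.mem_insert _ _
        · rintro v hv
          rcases Set.mem_insert_iff.1 hv with rfl | ⟨p, hp, rfl⟩
          · refine ⟨gen_mem_G2 hQ h1 hiQ himaxQ, ?_, hi2⟩
            apply foldmax_lt hq1
            intro u hu
            rw [up2, Finset.mem_filter] at hu
            have : ¬ (q.1 < u.1) := by
              intro h
              have huB : u ∈ Q.filter (fun u => q.1 < u.1) := Finset.mem_filter.2 ⟨hu.1, h⟩
              exact absurd hu.2 (not_lt.2 (himax u huB))
            exact lt_of_le_of_ne (not_lt.1 this) (hqt1 u hu.1)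
          · obtain ⟨hg, hg1, hg2⟩ := himg p hp
            exact ⟨hg, hg1, hg2⟩
      · rintro ⟨p, hp, he⟩
        have : p.2 = i.2 := by
          have := congrArg Prod.snd he; simpa [gen] using this
        have hpi : p = i := h2 p (hDspec p hp).1 i hiQ this
        exact absurd ((hDspec p hp).2.2.1) (not_lt.2 (hpi ▸ hiq1.le))
    · -- no point to the right of q : extra element is on the x-axis
      have hall : ∀ u ∈ Q, u.1 < q.1 := by
        intro u hu
        have : ¬ (q.1 < u.1) := fun h => hB ⟨u, Finset.mem_filter.2 ⟨hu, h⟩⟩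
        exact lt_of_le_of_ne (not_lt.1 this) (hqt1 u hu)
      refine ⟨(M1 Q, 0), ?_, ?_⟩
      · apply Set.Subset.antisymm
        · rintro v ⟨hv, hv1, hv2⟩
          rcases key v hv hv1 hv2 with ⟨hve, -⟩ | ⟨p, hpQ, hp2, hpmax, hvgen, hpq2, hvp1⟩
          · rw [hve]; exact Set.mem_insert _ _
          · have hpq1 : p.1 < q.1 := hall p hpQ
            exact Set.mem_insert_of_mem _
              ⟨p, by
                simp only [Finset.mem_coe, hD, maxF, Finset.mem_filter]
                exact ⟨⟨hpQ, hpmax⟩, hpq1, hpq2⟩, hvgen.symm⟩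
        · rintro v hv
          rcases Set.mem_insert_iff.1 hv with rfl | ⟨p, hp, rfl⟩
          · have hM1 : M1 Q < 1 := by
              apply foldmax_lt one_pos
              intro u hu; exact (hQ u hu).2.1
            refine ⟨?_, foldmax_lt hq1 hall, hq2⟩
            rw [mem_G2_iff]
            refine ⟨⟨foldmax_nonneg _ _, hM1, le_rfl, one_pos, ?_⟩, ?_, Or.inl rfl⟩
            · rintro u hu ⟨hu1, -⟩
              exact absurd (le_foldmax hu) (not_le.2 hu1)
            · rcases foldmax_cases Q (fun u => u.1) with h0 | ⟨u, hu, hfu⟩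
              · left; exact h0
              · right; exact ⟨u, hu, hfu, (hQ u hu).2.2.1⟩
          · obtain ⟨hg, hg1, hg2⟩ := himg p hp
            exact ⟨hg, hg1, hg2⟩
      · rintro ⟨p, hp, he⟩
        have h0 : p.2 = 0 := by
          have := congrArg Prod.snd he; simpa [gen] using this
        exact absurd h0 (ne_of_gt (hQ p (hDspec p hp).1).2.2.1)
  rw [he_set, Set.ncard_insert_of_notMem he_mem (D.finite_toSet.image _),
    Set.ncard_image_of_injOn hinj, Set.ncard_coe_finset]

lemma maxF_insert (Q : Finset (ℝ × ℝ)) (q : ℝ × ℝ) (hqQ : q ∉ Q)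
    (hundom : ∀ p ∈ Q, ¬(q.1 < p.1 ∧ q.2 < p.2)) :
    maxF (insert q Q) = insert q ((maxF Q).filter (fun p => ¬(p.1 < q.1 ∧ p.2 < q.2))) := by
  ext p
  simp only [maxF, Finset.mem_filter, Finset.mem_insert]
  constructor
  · rintro ⟨hp | hp, hmax⟩
    · exact Or.inl hp
    · refine Or.inr ⟨⟨hp, fun u hu => hmax u (Or.inr hu)⟩, hmax q (Or.inl rfl)⟩
  · rintro (rfl | ⟨⟨hp, hmax⟩, hnd⟩)
    · refine ⟨Or.inl rfl, ?_⟩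
      rintro u (rfl | hu)
      · rintro ⟨h, -⟩; exact absurd h (lt_irrefl _)
      · exact hundom u hu
    · refine ⟨Or.inr hp, ?_⟩
      rintro u (rfl | hu)
      · exact hnd
      · exact hmax u hu

/-! ### 3D characterization of generators -/

lemma mem_generators_iff {d ρ : ℕ} (r : Fin ρ → Fin d → ℝ) (g : Fin d → ℝ) :
    g ∈ generators r ↔ g ∈ recordSet r ∧
      ∀ j, g j = 0 ∨ ∃ i, r i j = g j ∧ ∀ j', j' ≠ j → g j' < r i j' := by
  constructor
  · rintro ⟨hS, hmin⟩
    refine ⟨hS, ?_⟩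
    intro j
    by_contra hcon
    push_neg at hcon
    obtain ⟨hj0, hw⟩ := hcon
    have hgj : 0 < g j := lt_of_le_of_ne (hS.1 j).1 (Ne.symm hj0)
    set T := Finset.univ.filter (fun i => ∀ j', j' ≠ j → g j' < r i j') with hT
    have hlt : ∀ i ∈ T, r i j < g j := by
      intro i hi
      rw [hT, Finset.mem_filter] at hi
      have h1 : ¬ (g j < r i j) := by
        intro h
        apply hS.2 i
        intro j'
        by_cases hj' : j' = j
        · exact hj' ▸ h
        · exact hi.2 j' hj'
      refine lt_of_le_of_ne (not_lt.1 h1) (fun he => ?_)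
      obtain ⟨j', hj', hge⟩ := hw i he
      exact absurd (hi.2 j' hj') (not_lt.2 hge)
    set c := T.fold max 0 (fun i => r i j) with hc
    have hclt : c < g j := foldmax_lt hgj hlt
    have hy : Function.update g j c ∈ recordSet r := by
      constructor
      · intro j'
        by_cases hj' : j' = j
        · subst hj'
          rw [Function.update_self]
          exact ⟨foldmax_nonneg _ _, hclt.trans (hS.1 j').2⟩
        · rw [Function.update_of_ne hj']
          exact hS.1 j'
      · intro i hall
        by_cases hiT : i ∈ T
        · have := hall j
          rw [Function.update_self] at this
          exact absurd (le_foldmax hiT) (not_le.2 this)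
        · rw [hT, Finset.mem_filter] at hiT
          push_neg at hiT
          obtain ⟨j', hj', hge⟩ := hiT (Finset.mem_univ i)
          have := hall j'
          rw [Function.update_of_ne hj'] at this
          exact absurd this (not_lt.2 hge)
    have := hmin _ hy (by
      intro j'
      by_cases hj' : j' = j
      · subst hj'; rw [Function.update_self]; exact hclt.le
      · rw [Function.update_of_ne hj'])
    have := congrFun this j
    rw [Function.update_self] at this
    exact absurd this (ne_of_lt hclt)
  · rintro ⟨hS, hw⟩
    refine ⟨hS, ?_⟩
    intro y hy hle
    funext j
    by_contra hne
    have hlt : y j < g j := lt_of_le_of_ne (hle j) hne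
    have hgj0 : g j ≠ 0 := by
      intro h0
      exact absurd (h0 ▸ hlt) (not_lt.2 (hy.1 j).1)
    rcases hw j with h0 | ⟨i, hij, hother⟩
    · exact hgj0 h0
    · apply hy.2 i
      intro j'
      by_cases hj' : j' = j
      · subst hj'; exact hij ▸ hlt
      · exact lt_of_le_of_lt (hle j') (hother j' hj')

lemma generators_finite {d ρ : ℕ} (r : Fin ρ → Fin d → ℝ) : (generators r).Finite := by
  apply Set.Finite.subset (Set.Finite.pi (t := fun j : Fin d =>
    insert 0 (Set.range (fun i => r i j)))
    (fun j => (Set.finite_range _).insert 0))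
  intro g hg
  rw [mem_generators_iff] at hg
  intro j _
  rcases hg.2 j with h0 | ⟨i, hi, -⟩
  · exact Set.mem_insert_iff.2 (Or.inl h0)
  · exact Set.mem_insert_iff.2 (Or.inr ⟨i, hi⟩)

/-! ### small Fin 3 helpers -/

lemma fin3cases {P : Fin 3 → Prop} (h0 : P 0) (h1 : P 1) (h2 : P 2) : ∀ j, P j := by
  intro j; fin_cases j <;> assumption

lemma vec3_ext {g : Fin 3 → ℝ} {a b c : ℝ} (h0 : g 0 = a) (h1 : g 1 = b) (h2 : g 2 = c) :
    ![a, b, c] = g := by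
  funext j
  refine fin3cases (P := fun j => ![a,b,c] j = g j) ?_ ?_ ?_ j
  · exact h0.symm
  · exact h1.symm
  · exact h2.symm

/-! ### level-zero generators -/

lemma level_zero_eq {ρ : ℕ} (r : Fin ρ → Fin 3 → ℝ) (hr : ∀ i j, r i j ∈ Set.Ioo (0:ℝ) 1) :
    {g ∈ generators r | g 2 = 0} =
      (fun v : ℝ × ℝ => ![v.1, v.2, 0]) ''
        G2 (Finset.univ.image (fun i => (r i 0, r i 1))) := by
  set Q := Finset.univ.image (fun i => (r i 0, r i 1)) with hQdef
  have hQmem : ∀ p, p ∈ Q ↔ ∃ i, (r i 0, r i 1) = p := by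
    intro p; rw [hQdef, Finset.mem_image]
    constructor
    · rintro ⟨i, -, h⟩; exact ⟨i, h⟩
    · rintro ⟨i, h⟩; exact ⟨i, Finset.mem_univ i, h⟩
  apply Set.Subset.antisymm
  · rintro g ⟨hg, hg2⟩
    rw [mem_generators_iff] at hg
    obtain ⟨hS, hw⟩ := hg
    refine ⟨(g 0, g 1), ?_, vec3_ext rfl rfl hg2⟩
    rw [mem_G2_iff]
    refine ⟨⟨(hS.1 0).1, (hS.1 0).2, (hS.1 1).1, (hS.1 1).2, ?_⟩, ?_, ?_⟩
    · rintro p hp ⟨hp1, hp2⟩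
      obtain ⟨i, rfl⟩ := (hQmem p).1 hp
      apply hS.2 i
      refine fin3cases hp1 hp2 ?_
      rw [hg2]; exact (hr i 2).1
    · rcases hw 0 with h0 | ⟨i, hij, hother⟩
      · exact Or.inl h0
      · exact Or.inr ⟨(r i 0, r i 1), (hQmem _).2 ⟨i, rfl⟩, hij,
          hother 1 (by decide)⟩
    · rcases hw 1 with h0 | ⟨i, hij, hother⟩
      · exact Or.inl h0
      · exact Or.inr ⟨(r i 0, r i 1), (hQmem _).2 ⟨i, rfl⟩, hij,
          hother 0 (by decide)⟩
  · rintro g ⟨v, hv, rfl⟩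
    rw [mem_G2_iff] at hv
    obtain ⟨hS2, hw1, hw2⟩ := hv
    have heval0 : (![v.1, v.2, 0] : Fin 3 → ℝ) 0 = v.1 := rfl
    have heval1 : (![v.1, v.2, 0] : Fin 3 → ℝ) 1 = v.2 := rfl
    have heval2 : (![v.1, v.2, 0] : Fin 3 → ℝ) 2 = 0 := rfl
    refine ⟨?_, heval2⟩
    rw [mem_generators_iff]
    constructor
    · constructor
      · refine fin3cases ?_ ?_ ?_
        · exact ⟨hS2.1, hS2.2.1⟩
        · exact ⟨hS2.2.2.1, hS2.2.2.2.1⟩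
        · exact ⟨le_rfl, one_pos⟩
      · intro i hall
        exact hS2.2.2.2.2 (r i 0, r i 1) ((hQmem _).2 ⟨i, rfl⟩) ⟨hall 0, hall 1⟩
    · refine fin3cases ?_ ?_ ?_
      · rcases hw1 with h0 | ⟨p, hp, hp1, hp2⟩
        · exact Or.inl h0
        · obtain ⟨i, rfl⟩ := (hQmem p).1 hp
          refine Or.inr ⟨i, hp1, ?_⟩
          intro j' hj'
          refine fin3cases (P := fun j' => j' ≠ 0 → (![v.1,v.2,0] : Fin 3 → ℝ) j' < r i j')
            ?_ ?_ ?_ j' hj'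
          · intro h; exact absurd rfl h
          · intro _; exact hp2
          · intro _; exact (hr i 2).1
      · rcases hw2 with h0 | ⟨p, hp, hp2, hp1⟩
        · exact Or.inl h0
        · obtain ⟨i, rfl⟩ := (hQmem p).1 hp
          refine Or.inr ⟨i, hp2, ?_⟩
          intro j' hj'
          refine fin3cases (P := fun j' => j' ≠ 1 → (![v.1,v.2,0] : Fin 3 → ℝ) j' < r i j')
            ?_ ?_ ?_ j' hj'
          · intro _; exact hp1
          · intro h; exact absurd rfl h
          · intro _; exact (hr i 2).1
      · exact Or.inl heval2

/-! ### generators at the lowest level -/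

lemma level_min_eq {n : ℕ} (r : Fin (n+1) → Fin 3 → ℝ) (hr : ∀ i j, r i j ∈ Set.Ioo (0:ℝ) 1)
    (hties2 : Function.Injective (fun i => r i 2))
    (m : Fin (n+1)) (hmin : ∀ i, i ≠ m → r m 2 < r i 2) :
    {g ∈ generators r | g 2 = r m 2} =
      (fun v : ℝ × ℝ => ![v.1, v.2, r m 2]) ''
        {v ∈ G2 ((Finset.univ.erase m).image (fun i => (r i 0, r i 1))) |
          v.1 < r m 0 ∧ v.2 < r m 1} := by
  set Q := (Finset.univ.erase m).image (fun i => (r i 0, r i 1)) with hQdef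
  have hQmem : ∀ p, p ∈ Q ↔ ∃ i, i ≠ m ∧ (r i 0, r i 1) = p := by
    intro p; rw [hQdef, Finset.mem_image]
    constructor
    · rintro ⟨i, hi, h⟩; exact ⟨i, (Finset.mem_erase.1 hi).1, h⟩
    · rintro ⟨i, hi, h⟩; exact ⟨i, Finset.mem_erase.2 ⟨hi, Finset.mem_univ i⟩, h⟩
  apply Set.Subset.antisymm
  · rintro g ⟨hg, hg2⟩
    rw [mem_generators_iff] at hg
    obtain ⟨hS, hw⟩ := hg
    have hbelow : g 0 < r m 0 ∧ g 1 < r m 1 := by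
      rcases hw 2 with h0 | ⟨i, hij, hother⟩
      · exact absurd (h0 ▸ hg2.symm) (ne_of_gt (hr m 2).1)
      · have him : i = m := hties2 (show r i 2 = r m 2 from hij.trans hg2)
        subst him
        exact ⟨hother 0 (by decide), hother 1 (by decide)⟩
    refine ⟨(g 0, g 1), ⟨?_, hbelow.1, hbelow.2⟩, vec3_ext rfl rfl hg2⟩
    rw [mem_G2_iff]
    refine ⟨⟨(hS.1 0).1, (hS.1 0).2, (hS.1 1).1, (hS.1 1).2, ?_⟩, ?_, ?_⟩
    · rintro p hp ⟨hp1, hp2⟩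
      obtain ⟨i, him, rfl⟩ := (hQmem p).1 hp
      apply hS.2 i
      refine fin3cases hp1 hp2 ?_
      rw [hg2]; exact hmin i him
    · rcases hw 0 with h0 | ⟨i, hij, hother⟩
      · exact Or.inl h0
      · have him : i ≠ m := by
          rintro rfl
          have := hother 2 (by decide)
          rw [hg2] at this
          exact absurd this (lt_irrefl _)
        exact Or.inr ⟨(r i 0, r i 1), (hQmem _).2 ⟨i, him, rfl⟩, hij, hother 1 (by decide)⟩
    · rcases hw 1 with h0 | ⟨i, hij, hother⟩
      · exact Or.inl h0
      · have him : i ≠ m := by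
          rintro rfl
          have := hother 2 (by decide)
          rw [hg2] at this
          exact absurd this (lt_irrefl _)
        exact Or.inr ⟨(r i 0, r i 1), (hQmem _).2 ⟨i, him, rfl⟩, hij, hother 0 (by decide)⟩
  · rintro g ⟨v, ⟨hv, hb1, hb2⟩, rfl⟩
    rw [mem_G2_iff] at hv
    obtain ⟨hS2, hw1, hw2⟩ := hv
    refine ⟨?_, rfl⟩
    rw [mem_generators_iff]
    constructor
    · constructor
      · refine fin3cases ?_ ?_ ?_
        · exact ⟨hS2.1, hS2.2.1⟩
        · exact ⟨hS2.2.2.1, hS2.2.2.2.1⟩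
        · exact ⟨(hr m 2).1.le, (hr m 2).2⟩
      · intro i hall
        by_cases him : i = m
        · subst him
          exact absurd (hall 2) (lt_irrefl _)
        · exact hS2.2.2.2.2 (r i 0, r i 1) ((hQmem _).2 ⟨i, him, rfl⟩) ⟨hall 0, hall 1⟩
    · refine fin3cases ?_ ?_ ?_
      · rcases hw1 with h0 | ⟨p, hp, hp1, hp2⟩
        · exact Or.inl h0
        · obtain ⟨i, him, rfl⟩ := (hQmem p).1 hp
          refine Or.inr ⟨i, hp1, ?_⟩
          intro j' hj'
          refine fin3cases (P := fun j' => j' ≠ 0 →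
              (![v.1, v.2, r m 2] : Fin 3 → ℝ) j' < r i j') ?_ ?_ ?_ j' hj'
          · intro h; exact absurd rfl h
          · intro _; exact hp2
          · intro _; exact hmin i him
      · rcases hw2 with h0 | ⟨p, hp, hp2, hp1⟩
        · exact Or.inl h0
        · obtain ⟨i, him, rfl⟩ := (hQmem p).1 hp
          refine Or.inr ⟨i, hp2, ?_⟩
          intro j' hj'
          refine fin3cases (P := fun j' => j' ≠ 1 →
              (![v.1, v.2, r m 2] : Fin 3 → ℝ) j' < r i j') ?_ ?_ ?_ j' hj'
          · intro _; exact hp1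
          · intro h; exact absurd rfl h
          · intro _; exact hmin i him
      · refine Or.inr ⟨m, rfl, ?_⟩
        intro j' hj'
        refine fin3cases (P := fun j' => j' ≠ 2 →
            (![v.1, v.2, r m 2] : Fin 3 → ℝ) j' < r m j') ?_ ?_ ?_ j' hj'
        · intro _; exact hb1
        · intro _; exact hb2
        · intro h; exact absurd rfl h

/-! ### generators above the lowest level -/

lemma high_eq {n : ℕ} (r : Fin (n+1) → Fin 3 → ℝ) (m : Fin (n+1))
    (hmin : ∀ i, i ≠ m → r m 2 < r i 2) :
    {g ∈ generators r | r m 2 < g 2} =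
      {g ∈ generators (fun i => r (m.succAbove i)) | r m 2 < g 2} := by
  ext g
  simp only [Set.mem_setOf_eq]
  constructor
  · rintro ⟨hg, hg2⟩
    refine ⟨?_, hg2⟩
    rw [mem_generators_iff] at hg ⊢
    obtain ⟨hS, hw⟩ := hg
    constructor
    · exact ⟨hS.1, fun i' => hS.2 (m.succAbove i')⟩
    · intro j
      rcases hw j with h0 | ⟨i, hij, hother⟩
      · exact Or.inl h0
      · have him : i ≠ m := by
          rintro rfl
          by_cases hj : j = 2
          · subst hj
            exact absurd (hij ▸ hg2) (lt_irrefl _)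
          · have := hother 2 (fun h => hj h.symm)
            exact absurd (this.trans hg2) (lt_irrefl _)
        obtain ⟨i', hi'⟩ := Fin.exists_succAbove_eq him
        refine Or.inr ⟨i', ?_, ?_⟩
        · show r (m.succAbove i') j = g j
          rw [hi']; exact hij
        · intro j' hj'
          show g j' < r (m.succAbove i') j'
          rw [hi']; exact hother j' hj'
  · rintro ⟨hg, hg2⟩
    refine ⟨?_, hg2⟩
    rw [mem_generators_iff] at hg ⊢
    obtain ⟨hS, hw⟩ := hg
    constructor
    · refine ⟨hS.1, ?_⟩
      intro i
      by_cases him : i = m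
      · subst him
        intro hall
        exact absurd ((hall 2).trans (hg2)) (lt_irrefl _)
      · obtain ⟨i', hi'⟩ := Fin.exists_succAbove_eq him
        have h := hS.2 i'
        simp only [] at h
        rw [hi'] at h
        exact h
    · intro j
      rcases hw j with h0 | ⟨i', hij, hother⟩
      · exact Or.inl h0
      · exact Or.inr ⟨m.succAbove i', hij, hother⟩

/-! ### wrappers and main theorem -/

lemma G2_below_ncard' (Q : Finset (ℝ × ℝ))
    (hQ : ∀ p ∈ Q, 0 < p.1 ∧ p.1 < 1 ∧ 0 < p.2 ∧ p.2 < 1)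
    (h1 : ∀ p ∈ Q, ∀ u ∈ Q, p.1 = u.1 → p = u)
    (h2 : ∀ p ∈ Q, ∀ u ∈ Q, p.2 = u.2 → p = u)
    (a b : ℝ) (ha : 0 < a) (hb : 0 < b)
    (hundom : ∀ p ∈ Q, ¬(a < p.1 ∧ b < p.2))
    (hqt1 : ∀ p ∈ Q, p.1 ≠ a) (hqt2 : ∀ p ∈ Q, p.2 ≠ b) :
    {v ∈ G2 Q | v.1 < a ∧ v.2 < b}.ncard
      = ((maxF Q).filter (fun p => p.1 < a ∧ p.2 < b)).card + 1 :=
  G2_below_ncard Q hQ h1 h2 (a, b) ha hb hundom hqt1 hqt2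

lemma maxF_insert' (Q : Finset (ℝ × ℝ)) (a b : ℝ) (hqQ : (a, b) ∉ Q)
    (hundom : ∀ p ∈ Q, ¬(a < p.1 ∧ b < p.2)) :
    maxF (insert (a, b) Q) = insert (a, b) ((maxF Q).filter (fun p => ¬(p.1 < a ∧ p.2 < b))) :=
  maxF_insert Q (a, b) hqQ hundom

lemma G2_ncard (Q : Finset (ℝ × ℝ))
    (hQ : ∀ p ∈ Q, 0 < p.1 ∧ p.1 < 1 ∧ 0 < p.2 ∧ p.2 < 1)
    (h1 : ∀ p ∈ Q, ∀ u ∈ Q, p.1 = u.1 → p = u)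
    (h2 : ∀ p ∈ Q, ∀ u ∈ Q, p.2 = u.2 → p = u) :
    (G2 Q).ncard = (maxF Q).card + 1 := by
  have h := G2_below_ncard' Q hQ h1 h2 1 1 one_pos one_pos
    (fun p hp h => absurd h.1 (not_lt.2 (hQ p hp).2.1.le))
    (fun p hp => ne_of_lt (hQ p hp).2.1) (fun p hp => ne_of_lt (hQ p hp).2.2.2)
  have hset : {v ∈ G2 Q | v.1 < 1 ∧ v.2 < 1} = G2 Q := by
    apply Set.Subset.antisymm (Set.sep_subset _ _)
    intro v hv
    have h' := (mem_G2_iff Q v).1 hv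
    exact ⟨hv, h'.1.2.1, h'.1.2.2.2.1⟩
  have hfil : (maxF Q).filter (fun p => p.1 < 1 ∧ p.2 < 1) = maxF Q := by
    apply Finset.filter_true_of_mem
    intro p hp
    have hpQ : p ∈ Q := by rw [maxF] at hp; exact (Finset.mem_filter.1 hp).1
    exact ⟨(hQ p hpQ).2.1, (hQ p hpQ).2.2.2⟩
  rw [hset, hfil] at h
  exact h

lemma emb_inj (t : ℝ) : Function.Injective (fun v : ℝ × ℝ => ![v.1, v.2, t]) := by
  intro v w h
  have h0 : v.1 = w.1 := congrFun h 0
  have h1 : v.2 = w.2 := congrFun h 1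
  exact Prod.ext h0 h1

theorem generators_count_dim_three (ρ : ℕ)
    (r : Fin ρ → Fin 3 → ℝ)
    (hr : ∀ i j, r i j ∈ Set.Ioo (0:ℝ) 1)
    (hties : ∀ j : Fin 3, Function.Injective (fun i => r i j))
    (hinc : ∀ i i' : Fin ρ, i ≠ i' → ¬ r i ≤ r i') :
    (generators r).ncard = 2 * ρ + 1 := by
  induction ρ with
  | zero =>
    have h : generators r = {fun _ => (0:ℝ)} := by
      apply Set.Subset.antisymm
      · rintro g ⟨hS, hmin⟩
        have h0 : (fun _ => (0:ℝ)) ∈ recordSet r :=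
          ⟨fun j => ⟨le_rfl, one_pos⟩, fun i => i.elim0⟩
        have := hmin _ h0 (fun j => (hS.1 j).1)
        exact Set.mem_singleton_iff.2 this.symm
      · rintro g hgmem
        rw [Set.mem_singleton_iff] at hgmem
        subst hgmem
        refine ⟨⟨fun j => ⟨le_rfl, one_pos⟩, fun i => i.elim0⟩, ?_⟩
        intro y hy hle
        funext j
        exact le_antisymm (hle j) (hy.1 j).1
    rw [h, Set.ncard_singleton]
  | succ n ih =>
    -- the point with the smallest third coordinate
    obtain ⟨m, -, hm⟩ := Finset.exists_min_image Finset.univ (fun i => r i 2)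
      ⟨0, Finset.mem_univ 0⟩
    have hmin : ∀ i, i ≠ m → r m 2 < r i 2 := fun i hi =>
      lt_of_le_of_ne (hm i (Finset.mem_univ i)) (fun h => hi (hties 2 h).symm)
    set r' := fun i : Fin n => r (m.succAbove i) with hr'def
    have hr' : ∀ i j, r' i j ∈ Set.Ioo (0:ℝ) 1 := fun i j => hr _ j
    have hties' : ∀ j : Fin 3, Function.Injective (fun i => r' i j) :=
      fun j a b h => Fin.succAbove_right_injective (hties j h)
    have hinc' : ∀ i i' : Fin n, i ≠ i' → ¬ r' i ≤ r' i' :=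
      fun i i' hne => hinc _ _ (fun h => hne (Fin.succAbove_right_injective h))
    have IH := ih r' hr' hties' hinc'
    set Q' := (Finset.univ.erase m).image (fun i => (r i 0, r i 1)) with hQ'def
    set Qall := Finset.univ.image (fun i : Fin (n+1) => (r i 0, r i 1)) with hQalldef
    -- generic facts about projection images
    have hbounds : ∀ (s : Finset (Fin (n+1))) (p : ℝ × ℝ),
        p ∈ s.image (fun i => (r i 0, r i 1)) → 0 < p.1 ∧ p.1 < 1 ∧ 0 < p.2 ∧ p.2 < 1 := by
      intro s p hp
      obtain ⟨i, -, rfl⟩ := Finset.mem_image.1 hp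
      exact ⟨(hr i 0).1, (hr i 0).2, (hr i 1).1, (hr i 1).2⟩
    have hinj1 : ∀ (s : Finset (Fin (n+1))) (p : ℝ × ℝ),
        p ∈ s.image (fun i => (r i 0, r i 1)) → ∀ u ∈ s.image (fun i => (r i 0, r i 1)),
          p.1 = u.1 → p = u := by
      intro s p hp u hu he
      obtain ⟨i, -, rfl⟩ := Finset.mem_image.1 hp
      obtain ⟨i', -, rfl⟩ := Finset.mem_image.1 hu
      have : i = i' := hties 0 he
      rw [this]
    have hinj2 : ∀ (s : Finset (Fin (n+1))) (p : ℝ × ℝ),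
        p ∈ s.image (fun i => (r i 0, r i 1)) → ∀ u ∈ s.image (fun i => (r i 0, r i 1)),
          p.2 = u.2 → p = u := by
      intro s p hp u hu he
      obtain ⟨i, -, rfl⟩ := Finset.mem_image.1 hp
      obtain ⟨i', -, rfl⟩ := Finset.mem_image.1 hu
      have : i = i' := hties 1 he
      rw [this]
    have hQP' : ∀ p ∈ Q', 0 < p.1 ∧ p.1 < 1 ∧ 0 < p.2 ∧ p.2 < 1 :=
      fun p hp => hbounds _ p hp
    have h1' : ∀ p ∈ Q', ∀ u ∈ Q', p.1 = u.1 → p = u := fun p hp => hinj1 _ p hp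
    have h2' : ∀ p ∈ Q', ∀ u ∈ Q', p.2 = u.2 → p = u := fun p hp => hinj2 _ p hp
    have hQPall : ∀ p ∈ Qall, 0 < p.1 ∧ p.1 < 1 ∧ 0 < p.2 ∧ p.2 < 1 :=
      fun p hp => hbounds _ p hp
    have h1all : ∀ p ∈ Qall, ∀ u ∈ Qall, p.1 = u.1 → p = u := fun p hp => hinj1 _ p hp
    have h2all : ∀ p ∈ Qall, ∀ u ∈ Qall, p.2 = u.2 → p = u := fun p hp => hinj2 _ p hp
    have hundom' : ∀ p ∈ Q', ¬(r m 0 < p.1 ∧ r m 1 < p.2) := by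
      rintro p hp ⟨hp1, hp2⟩
      rw [hQ'def, Finset.mem_image] at hp
      obtain ⟨i, hi, rfl⟩ := hp
      have him : i ≠ m := (Finset.mem_erase.1 hi).1
      apply hinc m i (Ne.symm him)
      intro j
      exact fin3cases (P := fun j => r m j ≤ r i j) hp1.le hp2.le (hmin i him).le j
    have hqt1' : ∀ p ∈ Q', p.1 ≠ r m 0 := by
      intro p hp
      rw [hQ'def, Finset.mem_image] at hp
      obtain ⟨i, hi, rfl⟩ := hp
      exact fun h => (Finset.mem_erase.1 hi).1 (hties 0 h)
    have hqt2' : ∀ p ∈ Q', p.2 ≠ r m 1 := by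
      intro p hp
      rw [hQ'def, Finset.mem_image] at hp
      obtain ⟨i, hi, rfl⟩ := hp
      exact fun h => (Finset.mem_erase.1 hi).1 (hties 1 h)
    have hqm_not : (r m 0, r m 1) ∉ Q' := by
      intro hmem
      exact hqt1' _ hmem rfl
    have hQall_eq : Qall = insert (r m 0, r m 1) Q' := by
      rw [hQalldef, hQ'def]
      ext p
      simp only [Finset.mem_image, Finset.mem_insert, Finset.mem_univ, true_and,
        Finset.mem_erase]
      constructor
      · rintro ⟨i, h⟩
        by_cases him : i = m
        · subst him; exact Or.inl h.symm
        · exact Or.inr ⟨i, ⟨him, trivial⟩, h⟩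
      · rintro (rfl | ⟨i, ⟨him, -⟩, h⟩)
        · exact ⟨m, rfl⟩
        · exact ⟨i, h⟩
    -- partition of `generators r`
    have hcover : generators r = {g ∈ generators r | r m 2 < g 2} ∪
        ({g ∈ generators r | g 2 = r m 2} ∪ {g ∈ generators r | g 2 = 0}) := by
      apply Set.Subset.antisymm
      · intro g hg
        have hw2 := ((mem_generators_iff r g).1 hg).2 2
        rcases hw2 with h0 | ⟨i, hij, -⟩
        · exact Or.inr (Or.inr ⟨hg, h0⟩)
        · by_cases him : i = m
          · subst him; exact Or.inr (Or.inl ⟨hg, hij.symm⟩)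
          · exact Or.inl ⟨hg, hij ▸ hmin i him⟩
      · rintro g (⟨hg, -⟩ | ⟨hg, -⟩ | ⟨hg, -⟩) <;> exact hg
    have hd1 : Disjoint {g ∈ generators r | g 2 = r m 2} {g ∈ generators r | g 2 = 0} := by
      rw [Set.disjoint_left]
      rintro g ⟨-, h1⟩ ⟨-, h2⟩
      exact (ne_of_gt (hr m 2).1) (h1.symm.trans h2)
    have hd2 : Disjoint {g ∈ generators r | r m 2 < g 2}
        ({g ∈ generators r | g 2 = r m 2} ∪ {g ∈ generators r | g 2 = 0}) := by
      rw [Set.disjoint_left]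
      rintro g ⟨-, hgt⟩ (⟨-, h⟩ | ⟨-, h⟩)
      · rw [h] at hgt; exact absurd hgt (lt_irrefl _)
      · rw [h] at hgt; exact absurd ((hr m 2).1.trans hgt) (lt_irrefl 0)
    have hfinH : {g ∈ generators r | r m 2 < g 2}.Finite :=
      (generators_finite r).subset (Set.sep_subset _ _)
    have hfinL : {g ∈ generators r | g 2 = r m 2}.Finite :=
      (generators_finite r).subset (Set.sep_subset _ _)
    have hfinZ : {g ∈ generators r | g 2 = 0}.Finite :=
      (generators_finite r).subset (Set.sep_subset _ _)
    have htotal : (generators r).ncard = {g ∈ generators r | r m 2 < g 2}.ncard +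
        ({g ∈ generators r | g 2 = r m 2}.ncard + {g ∈ generators r | g 2 = 0}.ncard) := by
      conv_lhs => rw [hcover]
      rw [Set.ncard_union_eq hd2 hfinH (hfinL.union hfinZ),
        Set.ncard_union_eq hd1 hfinL hfinZ]
    -- partition of `generators r'`
    have hcover' : generators r' = {g ∈ generators r' | r m 2 < g 2} ∪
        {g ∈ generators r' | g 2 = 0} := by
      apply Set.Subset.antisymm
      · intro g hg
        have hw2 := ((mem_generators_iff r' g).1 hg).2 2
        rcases hw2 with h0 | ⟨i', hij, -⟩
        · exact Or.inr ⟨hg, h0⟩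
        · exact Or.inl ⟨hg, hij ▸ hmin (m.succAbove i') (Fin.succAbove_ne m i')⟩
      · rintro g (⟨hg, -⟩ | ⟨hg, -⟩) <;> exact hg
    have hd' : Disjoint {g ∈ generators r' | r m 2 < g 2} {g ∈ generators r' | g 2 = 0} := by
      rw [Set.disjoint_left]
      rintro g ⟨-, hgt⟩ ⟨-, h⟩
      rw [h] at hgt; exact absurd ((hr m 2).1.trans hgt) (lt_irrefl 0)
    have hfinH' : {g ∈ generators r' | r m 2 < g 2}.Finite :=
      (generators_finite r').subset (Set.sep_subset _ _)
    have hfinZ' : {g ∈ generators r' | g 2 = 0}.Finite :=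
      (generators_finite r').subset (Set.sep_subset _ _)
    have htotal' : (generators r').ncard = {g ∈ generators r' | r m 2 < g 2}.ncard +
        {g ∈ generators r' | g 2 = 0}.ncard := by
      conv_lhs => rw [hcover']
      rw [Set.ncard_union_eq hd' hfinH' hfinZ']
    -- the individual counts
    have hA : {g ∈ generators r | r m 2 < g 2} = {g ∈ generators r' | r m 2 < g 2} :=
      high_eq r m hmin
    have hL : {g ∈ generators r | g 2 = r m 2}.ncard =
        ((maxF Q').filter (fun p => p.1 < r m 0 ∧ p.2 < r m 1)).card + 1 := by
      rw [level_min_eq r hr (hties 2) m hmin, Set.ncard_image_of_injective _ (emb_inj _)]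
      exact G2_below_ncard' Q' hQP' h1' h2' (r m 0) (r m 1) (hr m 0).1 (hr m 1).1
        hundom' hqt1' hqt2'
    have hZ : {g ∈ generators r | g 2 = 0}.ncard = (maxF Qall).card + 1 := by
      rw [level_zero_eq r hr, Set.ncard_image_of_injective _ (emb_inj _)]
      exact G2_ncard Qall hQPall h1all h2all
    have hZ' : {g ∈ generators r' | g 2 = 0}.ncard = (maxF Q').card + 1 := by
      rw [level_zero_eq r' hr', Set.ncard_image_of_injective _ (emb_inj _)]
      have himg_eq : Finset.univ.image (fun i : Fin n => (r' i 0, r' i 1)) = Q' := by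
        rw [hQ'def]
        ext p
        simp only [Finset.mem_image, Finset.mem_univ, true_and, Finset.mem_erase]
        constructor
        · rintro ⟨i', h⟩
          exact ⟨m.succAbove i', ⟨Fin.succAbove_ne m i', trivial⟩, h⟩
        · rintro ⟨i, ⟨him, -⟩, h⟩
          obtain ⟨i', hi'⟩ := Fin.exists_succAbove_eq him
          refine ⟨i', ?_⟩
          show (r (m.succAbove i') 0, r (m.succAbove i') 1) = p
          rw [hi']; exact h
      rw [himg_eq]
      exact G2_ncard Q' hQP' h1' h2'
    have hmaxcard : (maxF Qall).card =
        ((maxF Q').filter (fun p => ¬(p.1 < r m 0 ∧ p.2 < r m 1))).card + 1 := by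
      rw [hQall_eq, maxF_insert' Q' (r m 0) (r m 1) hqm_not hundom']
      apply Finset.card_insert_of_notMem
      intro hmem
      have h := (Finset.mem_filter.1 hmem).1
      rw [maxF] at h
      exact hqm_not (Finset.mem_filter.1 h).1
    have hsplit := Finset.card_filter_add_card_filter_not
      (s := maxF Q') (p := fun p => p.1 < r m 0 ∧ p.2 < r m 1)
    rw [IH] at htotal'
    have hAn : {g ∈ generators r | r m 2 < g 2}.ncard =
        {g ∈ generators r' | r m 2 < g 2}.ncard := congrArg Set.ncard hA
    rw [htotal]
    rw [hAn]
    rw [hL]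
    rw [hZ]
    rw [hmaxcard]
    rw [hZ', ← hsplit] at htotal'
    linarith [htotal']
end

section
/- For d ≥ 1 and ρ = 2 incomparable points in (0,1)^d with no coordinate ties, the possible values for the number γ of minimal elements of the record-setting region are exactly the numbers of the form γ = d + a(d - a) with 1 ≤ a ≤ ⌊d/2⌋. In particular the minimum possible value is 2d - 1 and the maximum is d + ⌊d/2⌋⌈d/2⌉. -/
/-!
Every point `x` of the record-setting region has coordinates `j`, `k` with `r 0 j ≤ x j` and
`r 1 k ≤ x k`, so it dominates the corner `Pi.single j (r 0 j) ⊔ Pi.single k (r 1 k)`, which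
itself lies in the region. Hence the generators are exactly the minimal corners. The `d` diagonal
corners (`j = k`) are always minimal; an off-diagonal corner is minimal iff `r 0 j < r 1 j` and
`r 1 k < r 0 k`, since otherwise the diagonal corner at `j` (resp. `k`) lies strictly below it.
Thus `γ = d + a (d - a)` with `a = #{j | r 0 j < r 1 j}`, and incomparability means `0 < a < d`;
replacing `a` by `min a (d - a)` puts it in `[1, d / 2]`.
-/

open Finset

theorem minimal_iff_minimal_of_forall_exists_le {α : Type*} [PartialOrder α] {P Q : α → Prop}
    {x : α} (hQP : ∀ ⦃y⦄, Q y → P y) (hPQ : ∀ ⦃y⦄, P y → ∃ z, Q z ∧ z ≤ y) :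
    Minimal P x ↔ Minimal Q x := by
  refine ⟨fun hx => ?_, fun hx => ⟨hQP hx.prop, fun y hy hyx => ?_⟩⟩
  · obtain ⟨z, hz, hzx⟩ := hPQ hx.prop
    exact hx.mono hQP (hx.eq_of_le (hQP hz) hzx ▸ hz)
  · obtain ⟨z, hz, hzy⟩ := hPQ hy
    exact (hx.le_of_le hz (hzy.trans hyx)).trans hzy

theorem Pi.single_le_iff_of_nonneg {ι β : Type*} [DecidableEq ι] [Preorder β] [Zero β]
    {x : ι → β} (hx : 0 ≤ x) {i : ι} {a : β} : Pi.single i a ≤ x ↔ a ≤ x i := by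
  refine ⟨fun h => by simpa using h i, fun h l => ?_⟩
  rcases eq_or_ne l i with rfl | hl
  · simpa using h
  · simpa [hl] using hx l

theorem injective_fin_two_iff {α : Type*} {f : Fin 2 → α} : Function.Injective f ↔ f 0 ≠ f 1 := by
  refine ⟨fun h => h.ne (by decide), fun h i i' hii' => ?_⟩
  fin_cases i <;> fin_cases i' <;> simp_all [eq_comm]

theorem card_lt_add_card_gt {ι α : Type*} [Fintype ι] [LinearOrder α] {f g : ι → α}
    (hfg : ∀ i, f i ≠ g i) : #{i | f i < g i} + #{i | g i < f i} = Fintype.card ι := by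
  have hgt : ({i | g i < f i} : Finset ι) = ({i | ¬ f i < g i} : Finset ι) :=
    filter_congr fun i _ => ⟨fun h => h.not_gt, fun h => (not_lt.1 h).lt_of_ne' (hfg i)⟩
  rw [hgt, card_filter_add_card_filter_not, card_univ]

section Records

variable {d ρ : ℕ} {r : Fin ρ → Fin d → ℝ} {x : Fin d → ℝ}

theorem mem_recordSet_iff :
    x ∈ recordSet r ↔ (∀ j, x j ∈ Set.Ico (0:ℝ) 1) ∧ ∀ i, ∃ j, r i j ≤ x j := by
  simp only [recordSet, Set.mem_ofPred_eq, not_forall, not_lt]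

theorem generators_eq_setOf_minimal : generators r = {g | Minimal (· ∈ recordSet r) g} := by
  ext g
  simp only [generators, minimal_mem_iff, Set.mem_ofPred_eq, eq_comm (b := g)]

end Records

namespace TwoRecords

variable {d : ℕ} (r : Fin 2 → Fin d → ℝ)

def corner (j k : Fin d) : Fin d → ℝ := Pi.single j (r 0 j) ⊔ Pi.single k (r 1 k)

noncomputable def minimalPairs : Finset (Fin d × Fin d) :=
  univ.diag ∪ (({j | r 0 j < r 1 j} : Finset (Fin d)) ×ˢ ({k | r 1 k < r 0 k} : Finset (Fin d)))

variable {r} {j k l : Fin d} {x : Fin d → ℝ}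

theorem mem_minimalPairs :
    (j, k) ∈ minimalPairs r ↔ j = k ∨ r 0 j < r 1 j ∧ r 1 k < r 0 k := by
  simp [minimalPairs, mem_diag]

theorem corner_le_iff (hx : 0 ≤ x) : corner r j k ≤ x ↔ r 0 j ≤ x j ∧ r 1 k ≤ x k := by
  rw [corner, sup_le_iff, Pi.single_le_iff_of_nonneg hx, Pi.single_le_iff_of_nonneg hx]

theorem corner_nonneg (hr : ∀ i j, 0 ≤ r i j) : 0 ≤ corner r j k :=
  le_sup_of_le_left (Pi.single_nonneg.2 (hr 0 j))

theorem corner_apply_of_ne (hj : l ≠ j) (hk : l ≠ k) : corner r j k l = 0 := by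
  simp [corner, hj, hk]

theorem corner_apply_left (hr : ∀ i j, 0 ≤ r i j) (hjk : j ≠ k) : corner r j k j = r 0 j := by
  simp [corner, hjk, hr 0 j]

theorem corner_apply_right (hr : ∀ i j, 0 ≤ r i j) (hjk : j ≠ k) : corner r j k k = r 1 k := by
  simp [corner, hjk.symm, hr 1 k]

theorem corner_mem_recordSet (hr : ∀ i j, r i j ∈ Set.Ico (0:ℝ) 1) :
    corner r j k ∈ recordSet r := by
  have hr0 : ∀ i j, 0 ≤ r i j := fun i j => (hr i j).1
  have hc := corner_nonneg (j := j) (k := k) hr0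
  refine mem_recordSet_iff.2 ⟨fun l => ⟨hc l, ?_⟩, ?_⟩
  · simp only [corner, Pi.sup_apply, Pi.single_apply]
    split_ifs <;> simp [(hr _ _).2]
  · have := (corner_le_iff hc).1 le_rfl
    intro i
    fin_cases i
    exacts [⟨j, this.1⟩, ⟨k, this.2⟩]

theorem exists_corner_le (hx : x ∈ recordSet r) : ∃ j k, corner r j k ≤ x := by
  obtain ⟨hx01, hxr⟩ := mem_recordSet_iff.1 hx
  obtain ⟨j, hj⟩ := hxr 0
  obtain ⟨k, hk⟩ := hxr 1
  exact ⟨j, k, (corner_le_iff fun l => (hx01 l).1).2 ⟨hj, hk⟩⟩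

theorem eq_of_corner_le_corner (hr : ∀ i j, 0 < r i j) {j' k' : Fin d}
    (hjk : (j, k) ∈ minimalPairs r) (h : corner r j' k' ≤ corner r j k) : (j', k') = (j, k) := by
  have hr0 : ∀ i j, 0 ≤ r i j := fun i j => (hr i j).le
  obtain ⟨hj', hk'⟩ := (corner_le_iff (corner_nonneg hr0)).1 h
  have mem_of_le {i : Fin 2} {l : Fin d} (hl : r i l ≤ corner r j k l) : l = j ∨ l = k := by
    by_contra! hne
    exact (hr i l).not_ge (corner_apply_of_ne hne.1 hne.2 ▸ hl)
  rcases mem_minimalPairs.1 hjk with rfl | ⟨hj, hk⟩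
  · rw [or_self_iff.1 (mem_of_le hj'), or_self_iff.1 (mem_of_le hk')]
  have hjk : j ≠ k := by rintro rfl; exact hj.not_gt hk
  have hj'j : j' = j := by
    refine (mem_of_le hj').resolve_right ?_
    rintro rfl
    exact hk.not_ge (corner_apply_right hr0 hjk ▸ hj')
  have hk'k : k' = k := by
    refine (mem_of_le hk').resolve_left ?_
    rintro rfl
    exact hj.not_ge (corner_apply_left hr0 hjk ▸ hk')
  rw [hj'j, hk'k]

theorem exists_corner_lt_of_notMem (hr : ∀ i j, 0 < r i j) (hjk : (j, k) ∉ minimalPairs r) :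
    ∃ j' k', corner r j' k' < corner r j k := by
  have hr0 : ∀ i j, 0 ≤ r i j := fun i j => (hr i j).le
  have hc := corner_nonneg (j := j) (k := k) hr0
  simp only [mem_minimalPairs, not_or, not_and_or, not_lt] at hjk
  obtain ⟨hjk, hj | hk⟩ := hjk
  · refine ⟨j, j, lt_of_le_of_ne ((corner_le_iff hc).2 ?_) fun h => ?_⟩
    · rw [corner_apply_left hr0 hjk]
      exact ⟨le_rfl, hj⟩
    · have := eq_of_corner_le_corner hr (mem_minimalPairs.2 (.inl rfl)) h.ge
      exact hjk (Prod.ext_iff.1 this).2.symm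
  · refine ⟨k, k, lt_of_le_of_ne ((corner_le_iff hc).2 ?_) fun h => ?_⟩
    · rw [corner_apply_right hr0 hjk]
      exact ⟨hk, le_rfl⟩
    · have := eq_of_corner_le_corner hr (mem_minimalPairs.2 (.inl rfl)) h.ge
      exact hjk (Prod.ext_iff.1 this).1

theorem minimal_corner_iff (hr : ∀ i j, 0 < r i j) :
    Minimal (· ∈ Set.range (Function.uncurry (corner r))) (corner r j k) ↔
      (j, k) ∈ minimalPairs r := by
  refine ⟨fun h => ?_, fun hjk => ⟨⟨(j, k), rfl⟩, ?_⟩⟩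
  · by_contra hjk
    obtain ⟨j', k', hlt⟩ := exists_corner_lt_of_notMem hr hjk
    exact h.not_prop_of_lt hlt ⟨(j', k'), rfl⟩
  · rintro _ ⟨⟨j', k'⟩, rfl⟩ hle
    exact (congrArg (Function.uncurry (corner r)) (eq_of_corner_le_corner hr hjk hle)).ge

theorem generators_eq_image (hr : ∀ i j, r i j ∈ Set.Ioo (0:ℝ) 1) :
    generators r = (minimalPairs r).image (Function.uncurry (corner r)) := by
  have hcorner : ∀ ⦃y⦄, y ∈ Set.range (Function.uncurry (corner r)) → y ∈ recordSet r := by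
    rintro _ ⟨⟨j, k⟩, rfl⟩
    exact corner_mem_recordSet fun i j => Set.Ioo_subset_Ico_self (hr i j)
  have hdom : ∀ ⦃y⦄, y ∈ recordSet r → ∃ z ∈ Set.range (Function.uncurry (corner r)), z ≤ y := by
    intro y hy
    obtain ⟨j, k, hle⟩ := exists_corner_le hy
    exact ⟨_, ⟨(j, k), rfl⟩, hle⟩
  ext g
  rw [generators_eq_setOf_minimal, Set.mem_ofPred_eq,
    minimal_iff_minimal_of_forall_exists_le hcorner hdom, coe_image]
  constructor
  · intro hg
    obtain ⟨⟨j, k⟩, rfl⟩ := hg.prop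
    exact ⟨(j, k), (minimal_corner_iff fun i j => (hr i j).1).1 hg, rfl⟩
  · rintro ⟨⟨j, k⟩, hjk, rfl⟩
    exact (minimal_corner_iff fun i j => (hr i j).1).2 hjk

theorem ncard_generators (hr : ∀ i j, r i j ∈ Set.Ioo (0:ℝ) 1) :
    (generators r).ncard = d + #{j | r 0 j < r 1 j} * #{k | r 1 k < r 0 k} := by
  have hinj : Set.InjOn (Function.uncurry (corner r)) (minimalPairs r) := by
    rintro ⟨j, k⟩ hjk ⟨j', k'⟩ - h
    exact (eq_of_corner_le_corner (fun i j => (hr i j).1) hjk h.ge).symm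
  have hdisj : Disjoint (univ.diag : Finset (Fin d × Fin d))
      (({j | r 0 j < r 1 j} : Finset (Fin d)) ×ˢ ({k | r 1 k < r 0 k} : Finset (Fin d))) := by
    rw [disjoint_left]
    rintro ⟨j, k⟩ hd hp
    obtain ⟨-, rfl : j = k⟩ := mem_diag.1 hd
    simp only [mem_product, mem_filter_univ] at hp
    exact hp.1.not_gt hp.2
  rw [generators_eq_image hr, Set.ncard_coe_finset, card_image_of_injOn hinj, minimalPairs,
    card_union_of_disjoint hdisj, diag_card, card_product, card_univ, Fintype.card_fin]

theorem ncard_generators_of_ne (hr : ∀ i j, r i j ∈ Set.Ioo (0:ℝ) 1) (hne : ∀ j, r 0 j ≠ r 1 j) :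
    (generators r).ncard = d + #{j | r 0 j < r 1 j} * (d - #{j | r 0 j < r 1 j}) := by
  have hsum := card_lt_add_card_gt hne
  rw [Fintype.card_fin] at hsum
  rw [ncard_generators hr]
  congr 2
  omega

theorem incomparable_iff :
    (∀ i i' : Fin 2, i ≠ i' → ¬ r i ≤ r i') ↔ (∃ j, r 0 j < r 1 j) ∧ ∃ k, r 1 k < r 0 k := by
  simp only [Fin.forall_fin_two, Pi.le_def, not_forall, not_le]
  simpa using and_comm

end TwoRecords

theorem exists_le_half_mul_sub_eq {d a : ℕ} (ha : 1 ≤ a) (had : a < d) :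
    ∃ m, 1 ≤ m ∧ m ≤ d / 2 ∧ a * (d - a) = m * (d - m) := by
  rcases le_total a (d - a) with h | h
  · exact ⟨a, ha, by omega, rfl⟩
  · exact ⟨d - a, by omega, by omega, by rw [Nat.sub_sub_self had.le, mul_comm]⟩

theorem two_mul_sub_one_le_add_mul_sub {d m : ℕ} (hm1 : 1 ≤ m) (hm : m ≤ d / 2) :
    2 * d - 1 ≤ d + m * (d - m) := by
  obtain ⟨n, rfl⟩ : ∃ n, d = m + n := ⟨d - m, by omega⟩
  have hn : 1 ≤ n := by omega
  rw [Nat.add_sub_cancel_left]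
  obtain ⟨m, rfl⟩ := Nat.exists_eq_add_of_le' hm1
  obtain ⟨n, rfl⟩ := Nat.exists_eq_add_of_le' hn
  ring_nf
  omega

theorem mul_sub_le_half_mul_half {d m : ℕ} (hm : m ≤ d / 2) :
    m * (d - m) ≤ d / 2 * ((d + 1) / 2) := by
  obtain ⟨s, hs⟩ : ∃ s, d / 2 = m + s := ⟨d / 2 - m, by omega⟩
  obtain ⟨t, ht⟩ : ∃ t, (d + 1) / 2 = m + s + t := ⟨(d + 1) / 2 - d / 2, by omega⟩
  have hd : d = m + (m + 2 * s + t) := by omega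
  rw [hs, ht, hd, Nat.add_sub_cancel_left]
  nlinarith

noncomputable def splitRecords (d a : ℕ) : Fin 2 → Fin d → ℝ :=
  ![fun j => if (j : ℕ) < a then 1 / 3 else 2 / 3, fun j => if (j : ℕ) < a then 2 / 3 else 1 / 3]

section SplitRecords

variable {d a : ℕ}

theorem splitRecords_mem_Ioo (i : Fin 2) (j : Fin d) : splitRecords d a i j ∈ Set.Ioo (0:ℝ) 1 := by
  fin_cases i <;> simp only [splitRecords, Fin.zero_eta, Fin.mk_one, Matrix.cons_val_zero,
    Matrix.cons_val_one] <;> split_ifs <;> norm_num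

theorem splitRecords_zero_lt_one_iff {j : Fin d} :
    splitRecords d a 0 j < splitRecords d a 1 j ↔ (j : ℕ) < a := by
  simp only [splitRecords, Matrix.cons_val_zero, Matrix.cons_val_one]
  split_ifs with h <;> norm_num [h]

theorem splitRecords_one_lt_zero_iff {j : Fin d} :
    splitRecords d a 1 j < splitRecords d a 0 j ↔ ¬ (j : ℕ) < a := by
  simp only [splitRecords, Matrix.cons_val_zero, Matrix.cons_val_one]
  split_ifs with h <;> norm_num [h]

theorem card_splitRecords_lt (had : a ≤ d) :
    #{j | splitRecords d a 0 j < splitRecords d a 1 j} = a := by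
  rw [filter_congr fun j _ => splitRecords_zero_lt_one_iff, Fin.card_filter_val_lt,
    min_eq_right had]

theorem splitRecords_ne (j : Fin d) : splitRecords d a 0 j ≠ splitRecords d a 1 j := by
  simp only [splitRecords, Matrix.cons_val_zero, Matrix.cons_val_one]
  split_ifs <;> norm_num

end SplitRecords

open TwoRecords in
theorem generators_two_records_general (d : ℕ) :
    (∀ r : Fin 2 → Fin d → ℝ,
      (∀ i j, r i j ∈ Set.Ioo (0:ℝ) 1) →
      (∀ j : Fin d, Function.Injective (fun i => r i j)) →
      (∀ i i' : Fin 2, i ≠ i' → ¬ r i ≤ r i') →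
      (∃ a : ℕ, 1 ≤ a ∧ a ≤ d / 2 ∧ (generators r).ncard = d + a * (d - a)) ∧
      2 * d - 1 ≤ (generators r).ncard ∧
      (generators r).ncard ≤ d + (d / 2) * ((d + 1) / 2)) ∧
    (∀ a : ℕ, 1 ≤ a → a ≤ d / 2 →
      ∃ r : Fin 2 → Fin d → ℝ,
        (∀ i j, r i j ∈ Set.Ioo (0:ℝ) 1) ∧
        (∀ j : Fin d, Function.Injective (fun i => r i j)) ∧
        (∀ i i' : Fin 2, i ≠ i' → ¬ r i ≤ r i') ∧
        (generators r).ncard = d + a * (d - a)) := by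
  refine ⟨fun r hr hinj hinc => ?_, fun a ha had => ?_⟩
  · have hne : ∀ j, r 0 j ≠ r 1 j := fun j => injective_fin_two_iff.1 (hinj j)
    obtain ⟨⟨j, hj⟩, ⟨k, hk⟩⟩ := incomparable_iff.1 hinc
    have hA : 1 ≤ #{j | r 0 j < r 1 j} := card_pos.2 ⟨j, (mem_filter_univ j).2 hj⟩
    have hAd : #{j | r 0 j < r 1 j} < d := by
      simpa using card_lt_univ_of_notMem (s := {j | r 0 j < r 1 j}) (x := k)
        (by simpa using hk.le)
    obtain ⟨m, hm1, hm, hmul⟩ := exists_le_half_mul_sub_eq hA hAd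
    rw [ncard_generators_of_ne hr hne, hmul]
    exact ⟨⟨m, hm1, hm, rfl⟩, two_mul_sub_one_le_add_mul_sub hm1 hm,
      Nat.add_le_add_left (mul_sub_le_half_mul_half hm) d⟩
  · refine ⟨splitRecords d a, splitRecords_mem_Ioo,
      fun j => injective_fin_two_iff.2 (splitRecords_ne j), incomparable_iff.2
        ⟨⟨⟨0, by omega⟩, splitRecords_zero_lt_one_iff.2 ha⟩,
          ⟨⟨a, by omega⟩, splitRecords_one_lt_zero_iff.2 (lt_irrefl a)⟩⟩, ?_⟩
    rw [ncard_generators_of_ne splitRecords_mem_Ioo splitRecords_ne,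
      card_splitRecords_lt (by omega)]

theorem generators_two_records (d : ℕ) (hd : 1 ≤ d) :
    (∀ r : Fin 2 → Fin d → ℝ,
      (∀ i j, r i j ∈ Set.Ioo (0:ℝ) 1) →
      (∀ j : Fin d, Function.Injective (fun i => r i j)) →
      (∀ i i' : Fin 2, i ≠ i' → ¬ r i ≤ r i') →
      (∃ a : ℕ, 1 ≤ a ∧ a ≤ d / 2 ∧ (generators r).ncard = d + a * (d - a)) ∧
      2 * d - 1 ≤ (generators r).ncard ∧
      (generators r).ncard ≤ d + (d / 2) * ((d + 1) / 2)) ∧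
    (∀ a : ℕ, 1 ≤ a → a ≤ d / 2 →
      ∃ r : Fin 2 → Fin d → ℝ,
        (∀ i j, r i j ∈ Set.Ioo (0:ℝ) 1) ∧
        (∀ j : Fin d, Function.Injective (fun i => r i j)) ∧
        (∀ i i' : Fin 2, i ≠ i' → ¬ r i ≤ r i') ∧
        (generators r).ncard = d + a * (d - a)) :=
  generators_two_records_general d
end
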